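/- Writing Q(f) := {𝒬,f} for f ∈ A, the graded commutator of Q with a Hamiltonian vector field satisfies [Q, X_f] = -X_{Q(f)}; explicitly, Q(X_f(g)) - (-1)^{|f|+1} X_f(Q(g)) = -X_{Q(f)}(g) for all homogeneous f ∈ A and all g ∈ A. (Part 2 of the corollary on the homological vector field of an odd Jacobi manifold.) -/
import Mathlib


noncomputable section

/-- The sign `(-1)^i` for a parity `i : ZMod 2`. -/
def zsign (i : ZMod 2) : ℝ := if i = 0 then 1 else -1

/-- A Poisson superalgebra: a unital associative `ℝ`-algebra `P` with a `ℤ/2`-grading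
`P = P₀ ⊕ P₁` which is graded-commutative, equipped with an `ℝ`-bilinear, parity-preserving
bracket satisfying graded antisymmetry, the graded Leibniz rule and the graded Jacobi
identity (for homogeneous elements). -/
structure PoissonSuperalgebra (P : Type*) [Ring P] [Algebra ℝ P] where
  grade : ZMod 2 → Submodule ℝ P
  sup_grade : grade 0 ⊔ grade 1 = ⊤
  inf_grade : grade 0 ⊓ grade 1 = ⊥
  one_mem : (1 : P) ∈ grade 0
  mul_mem : ∀ {i j : ZMod 2} {a b : P}, a ∈ grade i → b ∈ grade j → a * b ∈ grade (i + j)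
  super_comm : ∀ {i j : ZMod 2} {a b : P}, a ∈ grade i → b ∈ grade j →
    a * b = zsign (i * j) • (b * a)
  bracket : P →ₗ[ℝ] P →ₗ[ℝ] P
  bracket_mem : ∀ {i j : ZMod 2} {a b : P}, a ∈ grade i → b ∈ grade j →
    bracket a b ∈ grade (i + j)
  bracket_antisymm : ∀ {i j : ZMod 2} {a b : P}, a ∈ grade i → b ∈ grade j →
    bracket a b = -(zsign (i * j) • bracket b a)
  bracket_leibniz : ∀ {i j k : ZMod 2} {a b c : P}, a ∈ grade i → b ∈ grade j →
    c ∈ grade k → bracket a (b * c) = bracket a b * c + zsign (i * j) • (b * bracket a c)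
  bracket_jacobi : ∀ {i j k : ZMod 2} {a b c : P}, a ∈ grade i → b ∈ grade j →
    c ∈ grade k →
    bracket a (bracket b c) = bracket (bracket a b) c + zsign (i * j) • bracket b (bracket a c)

variable {P : Type*} [Ring P] [Algebra ℝ P]

/-- The odd Jacobi bracket `[f,g]_J` associated to an odd Jacobi structure `(S, Q)`,
for `f` homogeneous of parity `i`:
`[f,g]_J = (-1)^{|f|+1} {{S,f},g} - (-1)^{|f|+1} {Q, f g}`. -/
def oddJacobiBracket (psa : PoissonSuperalgebra P) (S Q : P) (i : ZMod 2) (f g : P) : P :=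
  zsign (i + 1) • psa.bracket (psa.bracket S f) g - zsign (i + 1) • psa.bracket Q (f * g)

/-- The Hamiltonian vector field of a homogeneous `f` of parity `i`, acting on `g`:
`X_f(g) = (-1)^{|f|} [f,g]_J - {Q,f}·g`. -/
def hamiltonianVF (psa : PoissonSuperalgebra P) (S Q : P) (i : ZMod 2) (f g : P) : P :=
  zsign i • oddJacobiBracket psa S Q i f g - psa.bracket Q f * g

section Aux

lemma zmod2_cases (i : ZMod 2) : i = 0 ∨ i = 1 := by revert i; decide

lemma zsign_add_one (i : ZMod 2) : zsign (i + 1) = -zsign i := by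
  rcases zmod2_cases i with h | h <;> subst h <;>
    simp [zsign, show ((1 : ZMod 2) + 1) = 0 from by decide]

lemma zsign_mul_add_one (i : ZMod 2) : zsign i * zsign (i + 1) = -1 := by
  rw [zsign_add_one]
  rcases zmod2_cases i with h | h <;> subst h <;> norm_num [zsign]


variable {P : Type*} [Ring P] [Algebra ℝ P]

/-- Hamiltonian VF is additive in its last argument. -/
lemma hamVF_add (psa : PoissonSuperalgebra P) (S Q : P) (i : ZMod 2) (f a b : P) :
    hamiltonianVF psa S Q i f (a + b)
      = hamiltonianVF psa S Q i f a + hamiltonianVF psa S Q i f b := by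
  simp only [hamiltonianVF, oddJacobiBracket, mul_add, map_add, smul_add, smul_sub]
  abel

/-- Simplified formula for the Hamiltonian VF on homogeneous elements. -/
lemma hamVF_eq (psa : PoissonSuperalgebra P) (S Q : P)
    (hQ : Q ∈ psa.grade 1) {i j : ZMod 2} {f g : P}
    (hfi : f ∈ psa.grade i) (hgj : g ∈ psa.grade j) :
    hamiltonianVF psa S Q i f g
      = -(psa.bracket (psa.bracket S f) g) + zsign i • (f * psa.bracket Q g) := by
  have hL := psa.bracket_leibniz hQ hfi hgj
  rw [one_mul] at hL
  rw [hamiltonianVF, oddJacobiBracket, hL, smul_sub, smul_smul, smul_smul,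
    zsign_mul_add_one]
  module

lemma key (psa : PoissonSuperalgebra P) (S Q : P)
    (hS : S ∈ psa.grade 1) (hQ : Q ∈ psa.grade 1)
    (hQQ : psa.bracket Q Q = 0) (hQS : psa.bracket Q S = 0)
    {i j : ZMod 2} {f g : P} (hfi : f ∈ psa.grade i) (hgj : g ∈ psa.grade j) :
    psa.bracket Q (hamiltonianVF psa S Q i f g)
      - zsign (i + 1) • hamiltonianVF psa S Q i f (psa.bracket Q g)
      = -(hamiltonianVF psa S Q (i + 1) (psa.bracket Q f) g) := by
  have hQg : psa.bracket Q g ∈ psa.grade (1 + j) := psa.bracket_mem hQ hgj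
  have hQf : psa.bracket Q f ∈ psa.grade (i + 1) := by
    rw [add_comm]; exact psa.bracket_mem hQ hfi
  have hSf : psa.bracket S f ∈ psa.grade (1 + i) := psa.bracket_mem hS hfi
  -- {Q,{Q,g}} = 0
  have hQQg : psa.bracket Q (psa.bracket Q g) = 0 := by
    have h := psa.bracket_jacobi hQ hQ hgj
    rw [hQQ, map_zero, LinearMap.zero_apply, zero_add,
      show zsign (1 * 1) = -1 from rfl, neg_one_smul] at h
    have h2 : (2 : ℝ) • psa.bracket Q (psa.bracket Q g) = 0 := by
      rw [two_smul]; nth_rewrite 1 [h]; abel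
    simpa using smul_eq_zero.mp h2
  -- {Q,{S,f}} = -{S,{Q,f}}
  have hQSf : psa.bracket Q (psa.bracket S f)
      = -(psa.bracket S (psa.bracket Q f)) := by
    have h := psa.bracket_jacobi hQ hS hfi
    rwa [hQS, map_zero, LinearMap.zero_apply, zero_add,
      show zsign (1 * 1) = -1 from rfl, neg_one_smul] at h
  -- {Q, {{S,f},g}} via Jacobi
  have hJ : psa.bracket Q (psa.bracket (psa.bracket S f) g)
      = psa.bracket (psa.bracket Q (psa.bracket S f)) g
        + zsign (1 * (1 + i)) • psa.bracket (psa.bracket S f) (psa.bracket Q g) :=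
    psa.bracket_jacobi hQ hSf hgj
  rw [hamVF_eq psa S Q hQ hfi hgj, hamVF_eq psa S Q hQ hfi hQg,
    hamVF_eq psa S Q hQ hQf hgj, map_add, map_neg, map_smul, hJ, hQSf,
    psa.bracket_leibniz hQ hfi hQg, hQQg, map_neg, LinearMap.neg_apply]
  rw [one_mul, add_comm 1 i]
  simp only [zsign_add_one, smul_zero, mul_zero, add_zero, smul_neg, neg_smul, neg_neg]
  module

end Aux

/-- Part 2 of Corollary 2.1: `[Q, X_f] = -X_{Q(f)}`, i.e.
`Q(X_f(g)) - (-1)^{|f|+1} X_f(Q(g)) = -X_{Q(f)}(g)` where `Q(f) = {𝒬,f}`. -/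
theorem homological_hamiltonian_commutator
    (psa : PoissonSuperalgebra P) (A : Subalgebra ℝ P) (S Q : P)
    (hA_graded : ∀ a ∈ A, ∃ a₀ a₁ : P, a₀ ∈ A ∧ a₀ ∈ psa.grade 0 ∧
      a₁ ∈ A ∧ a₁ ∈ psa.grade 1 ∧ a = a₀ + a₁)
    (hA_bracket : ∀ f ∈ A, ∀ g ∈ A, psa.bracket f g = 0)
    (hS : S ∈ psa.grade 1) (hQ : Q ∈ psa.grade 1)
    (hQQ : psa.bracket Q Q = 0) (hQS : psa.bracket Q S = 0)
    (hSS : psa.bracket S S = -((2 : ℝ) • (Q * S)))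
    (hQA : ∀ f ∈ A, psa.bracket Q f ∈ A)
    (hSA : ∀ f ∈ A, ∀ g ∈ A, psa.bracket (psa.bracket S f) g ∈ A)
    {i : ZMod 2} {f g : P} (hf : f ∈ A) (hfi : f ∈ psa.grade i) (hg : g ∈ A) :
    psa.bracket Q (hamiltonianVF psa S Q i f g)
      - zsign (i + 1) • hamiltonianVF psa S Q i f (psa.bracket Q g)
      = -(hamiltonianVF psa S Q (i + 1) (psa.bracket Q f) g) := by
  obtain ⟨g₀, g₁, hg₀A, hg₀, hg₁A, hg₁, rfl⟩ := hA_graded g hg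
  have h0 := key psa S Q hS hQ hQQ hQS hfi hg₀
  have h1 := key psa S Q hS hQ hQQ hQS hfi hg₁
  rw [hamVF_add, map_add, map_add, hamVF_add, hamVF_add, smul_add, neg_add,
    ← h0, ← h1]
  abel
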